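/- For every sequence a : ℕ → ℚ, every μ ∈ ℚ and every n ∈ ℕ, the Hankel determinant of the μ-binomial transform of a equals the Hankel determinant of a; that is, if b_m = Σ_{i=0}^{m} C(m,i) μ^{m-i} a_i for all m, then det((b_{j+k})_{0 ≤ j,k ≤ n}) = det((a_{j+k})_{0 ≤ j,k ≤ n}). -/

import Mathlib

/-!
Let `L` be the linear functional on `R[X]` with `L (X ^ i) = a i`. Then `b m = L ((X + μ) ^ m)`,
so the Hankel matrix of `b` is the Gram matrix `(L (p j * p k))` of the polynomials
`p j = (X + μ) ^ j`. Expanding each `p j` in the monomial basis factors this Gram matrix as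
`P * H_a * Pᵀ`, where `H_a` is the Hankel matrix of `a` and `P` is lower unitriangular because
`p j` is monic of degree `j`; hence both Hankel determinants agree.
-/

open Finset Matrix Polynomial

variable {R : Type*} [CommRing R]

def hankel (a : ℕ → R) (n : ℕ) : Matrix (Fin n) (Fin n) R :=
  of fun j k => a (j + k)

def momentFunctional (a : ℕ → R) : R[X] →ₗ[R] R :=
  lsum fun i => LinearMap.mulRight R (a i)

def coeffMatrix {n : ℕ} (p : Fin n → R[X]) : Matrix (Fin n) (Fin n) R :=
  of fun j i => (p j).coeff i

theorem Polynomial.eq_sum_fin_monomial {p : R[X]} {n : ℕ} (hp : p.natDegree < n) :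
    p = ∑ i : Fin n, monomial i (p.coeff i) :=
  (p.as_sum_range' n hp).trans
    (Fin.sum_univ_eq_sum_range (fun i => monomial i (p.coeff i)) n).symm

theorem Polynomial.natDegree_X_add_C_pow_le (μ : R) (m : ℕ) :
    ((X + C μ) ^ m).natDegree ≤ m := by
  simpa using natDegree_pow_le_of_le m (natDegree_add_C.trans_le natDegree_X_le)

namespace momentFunctional

variable (a : ℕ → R)

theorem apply_monomial (i : ℕ) (c : R) : momentFunctional a (monomial i c) = c * a i := by
  simp [momentFunctional, lsum_apply, sum_monomial_index]

theorem apply_eq_sum_range {p : R[X]} {n : ℕ} (hp : p.natDegree < n) :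
    momentFunctional a p = ∑ i ∈ range n, p.coeff i * a i := by
  rw [momentFunctional, lsum_apply]
  exact sum_over_range' p (fun _ => map_zero _) n hp

theorem apply_mul {n : ℕ} {p q : R[X]} (hp : p.natDegree < n) (hq : q.natDegree < n) :
    momentFunctional a (p * q) =
      ∑ i : Fin n, ∑ l : Fin n, p.coeff i * a (i + l) * q.coeff l := by
  have hpq : p * q = ∑ i : Fin n, ∑ l : Fin n, monomial (i + l) (p.coeff i * q.coeff l) := by
    conv_lhs => rw [eq_sum_fin_monomial hp, eq_sum_fin_monomial hq, sum_mul_sum]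
    simp only [monomial_mul_monomial]
  simp only [hpq, map_sum, apply_monomial, mul_right_comm]

theorem gram_eq_coeffMatrix_mul_hankel {n : ℕ} (p q : Fin n → R[X])
    (hp : ∀ j, (p j).natDegree < n) (hq : ∀ k, (q k).natDegree < n) :
    of (fun j k => momentFunctional a (p j * q k)) =
      coeffMatrix p * hankel a n * (coeffMatrix q)ᵀ := by
  ext j k
  simp only [apply_mul a (hp j) (hq k), mul_apply, of_apply, coeffMatrix, hankel,
    transpose_apply, sum_mul]
  exact sum_comm

theorem det_gram_eq_det_hankel {n : ℕ} (p : Fin n → R[X]) (hdeg : ∀ j, (p j).natDegree ≤ j)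
    (hlead : ∀ j, (p j).coeff j = 1) :
    (of fun j k => momentFunctional a (p j * p k)).det = (hankel a n).det := by
  have hlt : ∀ j, (p j).natDegree < n := fun j => (hdeg j).trans_lt j.isLt
  have hP : (coeffMatrix p).det = 1 := by
    have htri : (coeffMatrix p).IsLowerTriangular := fun j i hij =>
      coeff_eq_zero_of_natDegree_lt ((hdeg j).trans_lt (Fin.lt_def.mp hij))
    rw [det_of_isLowerTriangular _ htri]
    simp [coeffMatrix, hlead]
  rw [gram_eq_coeffMatrix_mul_hankel a p p hlt hlt, det_mul, det_mul, det_transpose, hP,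
    one_mul, mul_one]

theorem apply_X_add_C_pow (μ : R) (m : ℕ) :
    momentFunctional a ((X + C μ) ^ m) =
      ∑ i ∈ range (m + 1), (m.choose i : R) * μ ^ (m - i) * a i := by
  simp only [apply_eq_sum_range a (Nat.lt_succ_of_le (natDegree_X_add_C_pow_le μ m)),
    coeff_X_add_C_pow, mul_comm (μ ^ _)]

end momentFunctional

open momentFunctional in
theorem hankel_binomial_invariant (a : ℕ → ℚ) (μ : ℚ) (n : ℕ) (b : ℕ → ℚ)
    (hb : ∀ m, b m = ∑ i ∈ Finset.range (m + 1), (m.choose i : ℚ) * μ ^ (m - i) * a i) :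
    (Matrix.of fun j k : Fin (n + 1) => b ((j : ℕ) + (k : ℕ))).det
      = (Matrix.of fun j k : Fin (n + 1) => a ((j : ℕ) + (k : ℕ))).det := by
  have hb_moment (j k : ℕ) :
      b (j + k) = momentFunctional a ((X + C μ) ^ j * (X + C μ) ^ k) := by
    rw [← pow_add, apply_X_add_C_pow, hb]
  simp only [hb_moment]
  exact det_gram_eq_det_hankel a _ (fun j => natDegree_X_add_C_pow_le μ j)
    (fun j => by simp [coeff_X_add_C_pow])
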